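/- With the notation of the previous statement (assuming $\mu \in \mathcal{M}^{(d)}$, i.e., $\sum_{i=1}^j \mu_i \geq \mu_\Sigma \binom{j}{d}/\binom{n}{d}$ for $d \leq j \leq n-1$), for every $j$ with $2 \leq j \leq n-1$ one has $\sum_{i=j}^n \alpha_i \leq -\min\{\mu_1, \epsilon/\binom{n}{d}\}$. -/

import Mathlib

/-!
Write `m = n + 1 - j`. By the hockey-stick identity the `λ`-parts of `α_j, …, α_n` add up to
`λ C(m, d) / C(n, d)`, while `μ_{φ(j)} + ⋯ + μ_{φ(n)}` is a sum of `m` distinct entries of the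
sorted vector `μ`, hence at least `μ_1 + ⋯ + μ_m`. If `d ≤ m`, the defining inequality of
`𝓜^{(d)}` bounds this from below by `μ_Σ C(m, d) / C(n, d)`, leaving
`-ε C(m, d) / C(n, d) ≤ -ε / C(n, d)`. If `m < d`, then `C(m, d) = 0` and the sum is at most `-μ_1`.
-/

open Finset

lemma sum_range_choose_eq_choose_succ (N k : ℕ) :
    ∑ i ∈ range N, i.choose k = N.choose (k + 1) := by
  induction N with
  | zero => simp
  | succ N ih => rw [sum_range_succ, ih, Nat.choose_succ_succ', add_comm]

lemma sum_Icc_choose_sub (j n k : ℕ) :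
    ∑ i ∈ Icc j n, (n - i).choose k = (n + 1 - j).choose (k + 1) := by
  rw [← Finset.Ico_add_one_right_eq_Icc, sum_Ico_reflect (·.choose k) j le_rfl, Nat.sub_self,
    Nat.Ico_zero_eq_range, sum_range_choose_eq_choose_succ]

lemma sum_Icc_one_card_le_sum {M : Type*} [AddCommMonoid M] [PartialOrder M]
    [IsOrderedAddMonoid M] {μ : ℕ → M} {n : ℕ} (hμ : MonotoneOn μ (Set.Icc 1 n))
    {S : Finset ℕ} (hS : S ⊆ Icc 1 n) :
    ∑ i ∈ Icc 1 #S, μ i ≤ ∑ s ∈ S, μ s := by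
  induction S using Finset.induction_on_max with
  | empty => simp
  | insert a s hlt ih =>
    have ha : a ∉ s := fun h => (hlt a h).false
    have hs : s ⊆ Icc 1 n := (subset_insert a s).trans hS
    have haI := mem_Icc.1 (hS (mem_insert_self a s))
    have hcard : #s + 1 ≤ a := by
      have : s ⊆ Ico 1 a := fun x hx => mem_Ico.2 ⟨(mem_Icc.1 (hs hx)).1, hlt x hx⟩
      have := card_le_card this
      simp only [Nat.card_Ico] at this
      omega
    rw [card_insert_of_notMem ha, sum_insert ha, sum_Icc_succ_top (by omega), add_comm]
    exact add_le_add (hμ ⟨by omega, by omega⟩ haI hcard) (ih hs)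

lemma sum_Icc_one_card_le_sum_comp {M : Type*} [AddCommMonoid M] [PartialOrder M]
    [IsOrderedAddMonoid M] {μ : ℕ → M} {n : ℕ} (hμ : MonotoneOn μ (Set.Icc 1 n))
    {T : Finset ℕ} {φ : ℕ → ℕ} (hφ : Set.InjOn φ T) (hT : ∀ i ∈ T, φ i ∈ Icc 1 n) :
    ∑ i ∈ Icc 1 #T, μ i ≤ ∑ i ∈ T, μ (φ i) := by
  rw [← sum_image hφ, ← card_image_of_injOn hφ]
  exact sum_Icc_one_card_le_sum hμ (image_subset_iff.2 hT)

lemma sum_Icc_eq_of_choose_sub {n d j : ℕ} (hd : 1 ≤ d) (hj : 1 ≤ j) {lam C : ℝ}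
    {α β : ℕ → ℝ} (hα : ∀ i, 1 ≤ i → i ≤ n →
      α i = if i ≤ n - d + 1 then lam * ((n - i).choose (d - 1) : ℝ) / C - β i else -β i) :
    ∑ i ∈ Icc j n, α i = lam * ((n + 1 - j).choose d : ℝ) / C - ∑ i ∈ Icc j n, β i := by
  have hterm : ∀ i ∈ Icc j n, α i = lam * ((n - i).choose (d - 1) : ℝ) / C - β i := by
    intro i hi
    rw [mem_Icc] at hi
    rw [hα i (by omega) hi.2]
    split_ifs with h
    · rfl
    · rw [Nat.choose_eq_zero_of_lt (by omega : n - i < d - 1)]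
      simp
  rw [sum_congr rfl hterm, sum_sub_distrib, ← sum_div, ← mul_sum, ← Nat.cast_sum,
    sum_Icc_choose_sub, Nat.sub_add_cancel hd]

theorem stmt_5_general (n d : ℕ) (hd : 1 ≤ d) (hdn : d ≤ n)
    (μ : ℕ → ℝ) (hμpos : ∀ i, 1 ≤ i → i ≤ n → 0 < μ i)
    (hμsorted : ∀ i j, 1 ≤ i → i ≤ j → j ≤ n → μ i ≤ μ j)
    (muSum : ℝ)
    (hM : ∀ j, d ≤ j → j ≤ n - 1 →
      ∑ i ∈ Finset.Icc 1 j, μ i ≥ muSum * (Nat.choose j d : ℝ) / (Nat.choose n d : ℝ))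
    (ε : ℝ) (hε : 0 < ε)
    (lam : ℝ) (hlam : lam = muSum - ε)
    (φ : ℕ → ℕ) (hφ : Set.BijOn φ (Set.Icc 1 n) (Set.Icc 1 n))
    (α : ℕ → ℝ)
    (hα : ∀ i, 1 ≤ i → i ≤ n →
      α i = if i ≤ n - d + 1 then
          lam * (Nat.choose (n - i) (d - 1) : ℝ) / (Nat.choose n d : ℝ) - μ (φ i)
        else -μ (φ i)) :
    ∀ j, 2 ≤ j → j ≤ n - 1 →
      ∑ i ∈ Finset.Icc j n, α i ≤ -min (μ 1) (ε / (Nat.choose n d : ℝ)) := by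
  intro j hj2 hjn
  have hC : (0 : ℝ) < n.choose d := by exact_mod_cast Nat.choose_pos hdn
  have hTn : ↑(Icc j n) ⊆ Set.Icc 1 n := by
    rw [coe_Icc]
    exact Set.Icc_subset_Icc_left (by omega)
  have hlow : ∑ i ∈ Icc 1 (n + 1 - j), μ i ≤ ∑ i ∈ Icc j n, μ (φ i) := by
    simpa using sum_Icc_one_card_le_sum_comp (fun a ha b hb hab => hμsorted a b ha.1 hab hb.2)
      (hφ.injOn.mono hTn) (fun i hi => by simpa using hφ.mapsTo (hTn hi))
  rw [sum_Icc_eq_of_choose_sub hd (by omega) hα]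
  rcases le_or_gt d (n + 1 - j) with hdm | hmd
  · have hμm := (hM _ hdm (by omega)).trans hlow
    have hCm : (1 : ℝ) ≤ (n + 1 - j).choose d := by exact_mod_cast Nat.choose_pos hdm
    calc lam * ((n + 1 - j).choose d : ℝ) / n.choose d - ∑ i ∈ Icc j n, μ (φ i)
        ≤ -(ε * (n + 1 - j).choose d / n.choose d) := by
          rw [hlam, sub_mul, sub_div]
          linarith
      _ ≤ -(ε / n.choose d) :=
          neg_le_neg (div_le_div_of_nonneg_right (le_mul_of_one_le_right hε.le hCm) hC.le)
      _ ≤ -min (μ 1) (ε / n.choose d) := neg_le_neg (min_le_right _ _)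
  · have hμ1 : μ 1 ≤ ∑ i ∈ Icc 1 (n + 1 - j), μ i := by
      refine single_le_sum (fun i hi => ?_) (mem_Icc.2 ⟨le_rfl, by omega⟩)
      have hi := mem_Icc.1 hi
      exact (hμpos i hi.1 (by omega)).le
    rw [Nat.choose_eq_zero_of_lt hmd, Nat.cast_zero, mul_zero, zero_div, zero_sub]
    linarith [min_le_left (μ 1) (ε / n.choose d)]

theorem stmt_5 (n d : ℕ) (hd : 1 ≤ d) (hdn : d ≤ n)
    (μ : ℕ → ℝ) (hμpos : ∀ i, 1 ≤ i → i ≤ n → 0 < μ i)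
    (hμsorted : ∀ i j, 1 ≤ i → i ≤ j → j ≤ n → μ i ≤ μ j)
    (muSum : ℝ) (hmuSum : muSum = ∑ i ∈ Finset.Icc 1 n, μ i)
    (hM : ∀ j, d ≤ j → j ≤ n - 1 →
      ∑ i ∈ Finset.Icc 1 j, μ i ≥ muSum * (Nat.choose j d : ℝ) / (Nat.choose n d : ℝ))
    (ε : ℝ) (hε : 0 < ε) (hεμ : ε < muSum)
    (lam : ℝ) (hlam : lam = muSum - ε)
    (φ : ℕ → ℕ) (hφ : Set.BijOn φ (Set.Icc 1 n) (Set.Icc 1 n))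
    (α : ℕ → ℝ)
    (hα : ∀ i, 1 ≤ i → i ≤ n →
      α i = if i ≤ n - d + 1 then
          lam * (Nat.choose (n - i) (d - 1) : ℝ) / (Nat.choose n d : ℝ) - μ (φ i)
        else -μ (φ i)) :
    ∀ j, 2 ≤ j → j ≤ n - 1 →
      ∑ i ∈ Finset.Icc j n, α i ≤ -min (μ 1) (ε / (Nat.choose n d : ℝ)) :=
  stmt_5_general n d hd hdn μ hμpos hμsorted muSum hM ε hε lam hlam φ hφ α hα
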